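/- arXiv:1807.01004 — 2 statements merged into one kernel-verified Lean document; each statement's English description precedes it below -/
import Mathlib

section
/- For every closed formula φ of SHMLnf, the synthesized transducer ⟦φ⟧e enforces φ; consequently the logic SHMLnf is enforceable. Concretely: (i) for every system p, if φ is satisfiable then ⟦φ⟧e[p] ∈ ⟦φ⟧, and (ii) for every system p, if p ∈ ⟦φ⟧ then ⟦φ⟧e[p] ∼ p. -/
set_option autoImplicit false

/-- A labelled transition system over observable actions `Act`;
`none` plays the role of the silent action τ. -/
structure LTS (Act : Type) where
  S : Type
  Tr : S → Option Act → S → Prop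

namespace Enf

open scoped Classical

variable {Act : Type}

/-- Zero or more silent steps. -/
def TauStar (L : LTS Act) : L.S → L.S → Prop :=
  Relation.ReflTransGen (fun p q => L.Tr p none q)

/-- The weak transition `p =a=> q`. -/
def WStep (L : LTS Act) (p : L.S) (a : Act) (q : L.S) : Prop :=
  ∃ p₁ p₂, TauStar L p p₁ ∧ L.Tr p₁ (some a) p₂ ∧ TauStar L p₂ q

/-- Weak trace `p =t=> q`. -/
inductive WTrace (L : LTS Act) : L.S → List Act → L.S → Prop
  | nil {p q : L.S} : TauStar L p q → WTrace L p [] q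
  | cons {p r q : L.S} {a : Act} {t : List Act} :
      WStep L p a r → WTrace L r t q → WTrace L p (a :: t) q

/-- SHML formulas: truth, falsehood, fixpoint variables, finite conjunctions,
modalities `[η]φ` (a guard set of actions together with an action-indexed
continuation, representing the symbolic action and the matching substitutions),
and greatest fixpoints. -/
inductive Frm (Act : Type) : Type where
  | tt : Frm Act
  | ff : Frm Act
  | var : ℕ → Frm Act
  | conj : (n : ℕ) → (Fin n → Frm Act) → Frm Act
  | box : Set Act → (Act → Frm Act) → Frm Act
  | max : ℕ → Frm Act → Frm Act

namespace Frm

/-- Free fixpoint variables. -/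
def fv : Frm Act → Set ℕ
  | .tt => ∅
  | .ff => ∅
  | .var X => {X}
  | .conj _ f => ⋃ i, fv (f i)
  | .box G k => ⋃ a ∈ G, fv (k a)
  | .max X φ => fv φ \ {X}

def Closed (φ : Frm Act) : Prop := fv φ = ∅

/-- Substitution `φ[ψ/X]` (of a closed formula `ψ`). -/
def subst : Frm Act → ℕ → Frm Act → Frm Act
  | .tt, _, _ => .tt
  | .ff, _, _ => .ff
  | .var Y, X, ψ => if Y = X then ψ else .var Y
  | .conj n f, X, ψ => .conj n (fun i => subst (f i) X ψ)
  | .box G k, X, ψ => .box G (fun a => subst (k a) X ψ)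
  | .max Y φ, X, ψ => if Y = X then .max Y φ else .max Y (subst φ X ψ)

/-- The normal-form fragment SHMLnf: conjunctions are conjunctions of
modalities with pairwise-disjoint guards, and each greatest fixpoint binds a
variable occurring free in its body. -/
inductive IsNF : Frm Act → Prop
  | tt : IsNF .tt
  | ff : IsNF .ff
  | var (X : ℕ) : IsNF (.var X)
  | conj (n : ℕ) (G : Fin n → Set Act) (k : Fin n → Act → Frm Act)
      (hdisj : ∀ i j : Fin n, i ≠ j → ∀ a : Act, a ∈ G i → a ∉ G j)
      (hk : ∀ i : Fin n, ∀ a ∈ G i, IsNF (k i a)) :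
      IsNF (.conj n fun i => .box (G i) (k i))
  | max (X : ℕ) (φ : Frm Act) (hfree : X ∈ fv φ) (hφ : IsNF φ) : IsNF (.max X φ)

/-- `gvar X φ`: the variable `X` does not occur unguarded (i.e. outside every
modality) in `φ`. -/
def gvar (X : ℕ) : Frm Act → Prop
  | .tt => True
  | .ff => True
  | .var Y => Y ≠ X
  | .conj _ f => ∀ i, gvar X (f i)
  | .box _ _ => True
  | .max Y φ => Y = X ∨ gvar X φ

/-- A formula is guarded if every occurrence of a fixpoint variable lies
beneath a modality. -/
def Guarded : Frm Act → Prop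
  | .tt => True
  | .ff => True
  | .var _ => True
  | .conj _ f => ∀ i, Guarded (f i)
  | .box G k => ∀ a ∈ G, Guarded (k a)
  | .max X φ => gvar X φ ∧ Guarded φ

/-- Number of top-level greatest-fixpoint binders. -/
def topMax : Frm Act → ℕ
  | .max _ φ => topMax φ + 1
  | _ => 0

end Frm

/-- Denotational semantics of (possibly open) formulas, relative to an
environment mapping fixpoint variables to sets of states; `max` is interpreted
as the greatest fixpoint of the induced monotone map. -/
def sem (L : LTS Act) : Frm Act → (ℕ → Set L.S) → Set L.S
  | .tt, _ => Set.univ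
  | .ff, _ => ∅
  | .var X, ρ => ρ X
  | .conj _ f, ρ => ⋂ i, sem L (f i) ρ
  | .box G k, ρ => {p | ∀ a ∈ G, ∀ q, WStep L p a q → q ∈ sem L (k a) ρ}
  | .max X φ, ρ => ⋃₀ {S | S ⊆ sem L φ (Function.update ρ X S)}

/-- Semantics of closed formulas. -/
def Sem (L : LTS Act) (φ : Frm Act) : Set L.S := sem L φ fun _ => ∅

/-- Satisfiability. -/
def SatIn (L : LTS Act) (φ : Frm Act) : Prop := (Sem L φ).Nonempty

/-- The violation relation `p ⊨v^t φ`, defined as the least relation closed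
under the given rules. -/
inductive Viol (L : LTS Act) : L.S → List Act → Frm Act → Prop
  | ff (p : L.S) : Viol L p [] .ff
  | conj {p : L.S} {t : List Act} {n : ℕ} {f : Fin n → Frm Act} (j : Fin n) :
      Viol L p t (f j) → Viol L p t (.conj n f)
  | box {p p' : L.S} {t : List Act} {a : Act} {G : Set Act} {k : Act → Frm Act} :
      a ∈ G → WStep L p a p' → Viol L p' t (k a) → Viol L p (a :: t) (.box G k)
  | max {p : L.S} {t : List Act} {X : ℕ} {φ : Frm Act} :
      Viol L p t (Frm.subst φ X (.max X φ)) → Viol L p t (.max X φ)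

/-- Transducers (enforcement monitors): identity, symbolic transformation
prefixes (a guard set of extended input actions, with `none` standing for the
insertion pattern •, an output per matched input, with `none` standing for τ,
and a continuation per matched input), finite selections, recursion, and
recursion variables. -/
inductive Trn (Act : Type) : Type where
  | id : Trn Act
  | prf : Set (Option Act) → (Option Act → Option Act) → (Option Act → Trn Act) → Trn Act
  | sel : (n : ℕ) → (Fin n → Trn Act) → Trn Act
  | fix : ℕ → Trn Act → Trn Act
  | var : ℕ → Trn Act

namespace Trn

def tsubst : Trn Act → ℕ → Trn Act → Trn Act
  | .id, _, _ => .id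
  | .prf G out k, x, s => .prf G out fun γ => tsubst (k γ) x s
  | .sel n f, x, s => .sel n fun i => tsubst (f i) x s
  | .fix y e, x, s => if y = x then .fix y e else .fix y (tsubst e x s)
  | .var y, x, s => if y = x then s else .var y

end Trn

/-- Transducer transitions: labels are pairs (input, output) where input
`none` is the insertion pattern • and output `none` is τ. -/
inductive TStep : Trn Act → Option Act × Option Act → Trn Act → Prop
  | id (a : Act) : TStep .id (some a, some a) .id
  | prf {G : Set (Option Act)} {out : Option Act → Option Act}
      {k : Option Act → Trn Act} {γ : Option Act} (h : γ ∈ G) :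
      TStep (.prf G out k) (γ, out γ) (k γ)
  | sel {n : ℕ} {f : Fin n → Trn Act} {l : Option Act × Option Act}
      {e' : Trn Act} (i : Fin n) (h : TStep (f i) l e') :
      TStep (.sel n f) l e'
  | fix {x : ℕ} {e : Trn Act} {l : Option Act × Option Act} {e' : Trn Act}
      (h : TStep (Trn.tsubst e x (.fix x e)) l e') :
      TStep (.fix x e) l e'

/-- Instrumentation of a transducer on a system. -/
inductive IStep (L : LTS Act) : Trn Act × L.S → Option Act → Trn Act × L.S → Prop
  | trn {e e' : Trn Act} {p p' : L.S} {a : Act} {μ : Option Act} :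
      L.Tr p (some a) p' → TStep e (some a, μ) e' → IStep L (e, p) μ (e', p')
  | asy {e : Trn Act} {p p' : L.S} :
      L.Tr p none p' → IStep L (e, p) none (e, p')
  | ins {e e' : Trn Act} {p : L.S} {μ : Option Act} :
      TStep e (none, μ) e' → IStep L (e, p) μ (e', p)
  | ter {e : Trn Act} {p p' : L.S} {a : Act} :
      L.Tr p (some a) p' →
      (∀ μ e', ¬ TStep e (some a, μ) e') →
      (∀ μ e', ¬ TStep e (none, μ) e') →
      IStep L (e, p) (some a) (Trn.id, p')

/-- The LTS of monitored systems `e[p]`. -/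
def instLTS (L : LTS Act) : LTS Act := ⟨Trn Act × L.S, IStep L⟩

/-- Strong bisimulations between (the state spaces of) two LTSs. -/
def IsBisim (L₁ L₂ : LTS Act) (R : L₁.S → L₂.S → Prop) : Prop :=
  ∀ s r, R s r →
    (∀ μ s', L₁.Tr s μ s' → ∃ r', L₂.Tr r μ r' ∧ R s' r') ∧
    (∀ μ r', L₂.Tr r μ r' → ∃ s', L₁.Tr s μ s' ∧ R s' r')

/-- Strong bisimilarity. -/
def Bisim (L₁ L₂ : LTS Act) (s : L₁.S) (r : L₂.S) : Prop :=
  ∃ R, IsBisim L₁ L₂ R ∧ R s r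

/-- The synthesis function `⟦-⟧e` from SHMLnf formulas to transducers:
formula variable `X` becomes monitor variable `X+1`; `tt` and `ff` become the
identity monitor; `max X.φ` becomes the corresponding recursive monitor; and a
normalised conjunction of modalities becomes a recursive selection (on the
fresh variable `0`) of symbolic prefixes that suppress (output τ, continue as
the recursion variable) actions whose continuation formula is `ff` and pass
through all other matched actions, continuing with the synthesis of the
respective continuation formula. -/
noncomputable def synth : Frm Act → Trn Act
  | .tt => .id
  | .ff => .id
  | .var X => .var (X + 1)
  | .max X φ => .fix (X + 1) (synth φ)
  | .box G k =>
      .prf {γ | ∃ a ∈ G, γ = some a}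
        (fun γ =>
          match γ with
          | some a => if k a = Frm.ff then none else some a
          | none => none)
        (fun γ =>
          match γ with
          | some a => if k a = Frm.ff then Trn.var 0 else synth (k a)
          | none => .id)
  | .conj n f => .fix 0 (.sel n fun i => synth (f i))

/-- Fuelled residual function (the fuel is consumed by fixpoint unfoldings;
on guarded closed SHMLnf formulas `topMax φ + 1` units of fuel suffice). -/
noncomputable def afterFuel : ℕ → Frm Act → Act → Frm Act
  | 0, _, _ => .tt
  | n + 1, φ, a =>
    match φ with
    | .max X ψ => afterFuel n (Frm.subst ψ X (.max X ψ)) a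
    | .conj m f =>
        if h : ∃ i : Fin m, ∃ G : Set Act, ∃ k : Act → Frm Act,
            f i = Frm.box G k ∧ a ∈ G
        then h.choose_spec.choose_spec.choose a
        else .tt
    | ψ => ψ

/-- The residual `after(φ, a)` of a guarded closed SHMLnf formula. -/
noncomputable def after (φ : Frm Act) (a : Act) : Frm Act :=
  afterFuel (Frm.topMax φ + 1) φ a

/-- Satisfaction relations (the coinductive rules of `⊨s`). -/
def IsSatRel (L : LTS Act) (R : L.S → Frm Act → Prop) : Prop :=
  (∀ p, ¬ R p .ff) ∧
  (∀ p (n : ℕ) (f : Fin n → Frm Act), R p (.conj n f) → ∀ i, R p (f i)) ∧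
  (∀ p (G : Set Act) (k : Act → Frm Act), R p (.box G k) →
      ∀ a ∈ G, ∀ q, WStep L p a q → R q (k a)) ∧
  (∀ p (X : ℕ) (φ : Frm Act), R p (.max X φ) → R p (Frm.subst φ X (.max X φ)))

/-- The largest satisfaction relation `⊨s`. -/
def SatCo (L : LTS Act) (p : L.S) (φ : Frm Act) : Prop :=
  ∃ R, IsSatRel L R ∧ R p φ

/-!
Transparency: pairing `⟦ψ⟧e[p]` with `p` whenever `p ⊨ ψ`, for closed normal forms `ψ`, is a
strong bisimulation. A system satisfying `ψ` never performs an action whose continuation is `ff`,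
so the monitor suppresses nothing; after a permitted action it continues as the monitor of the
continuation, which the successor satisfies, and an action outside every guard turns it into `id`.

Soundness: relating `⟦ψ⟧e[q]`, for `ψ` an unfolding of a closed normal form `ψ₀ ≠ ff`, to the
unfoldings of `ψ₀` and to the conjuncts of its conjunctive unfolding gives a satisfaction relation,
because forbidden actions are suppressed and a permitted one leads to the monitor of its
continuation. Every satisfaction relation lies inside the greatest-fixpoint semantics of closed
formulas, by induction on open formulas along a simultaneous substitution of closed formulas.
-/

namespace Frm

theorem Closed.notMem_fv {φ : Frm Act} (h : φ.Closed) (X : ℕ) : X ∉ fv φ :=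
  h ▸ Set.notMem_empty X

theorem fv_subst {χ : Frm Act} (hχ : χ.Closed) (φ : Frm Act) (X : ℕ) :
    fv (subst φ X χ) = fv φ \ {X} := by
  induction φ with
  | tt | ff => simp [subst, fv]
  | var Y =>
    by_cases h : Y = X
    · simp [subst, fv, h, show fv χ = ∅ from hχ]
    · simp [subst, fv, h, Ne.symm h]
  | conj n f ih => simp [subst, fv, ih, Set.iUnion_sdiff]
  | box G k ih => simp [subst, fv, ih, Set.iUnion_sdiff]
  | max Y φ ih =>
    by_cases h : Y = X
    · simp [subst, fv, h]
    · simp [subst, fv, h, ih, Set.sdiff_sdiff_comm]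

theorem Closed.subst_max {X : ℕ} {b : Frm Act} (h : Closed (.max X b)) :
    Closed (subst b X (.max X b)) := by
  simpa [Closed, fv_subst h, fv] using h

theorem subst_eq_ff_iff {χ : Frm Act} (hχ : χ ≠ .ff) (φ : Frm Act) (X : ℕ) :
    subst φ X χ = .ff ↔ φ = .ff := by
  cases φ <;> simp only [subst] <;> (try split_ifs) <;> simp [hχ]

theorem IsNF.subst {χ : Frm Act} (hχc : χ.Closed) (hχ : χ.IsNF) {φ : Frm Act}
    (hφ : φ.IsNF) (X : ℕ) : (φ.subst X χ).IsNF := by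
  induction hφ with
  | tt => exact .tt
  | ff => exact .ff
  | var Y => by_cases h : Y = X <;> simp [Frm.subst, h, hχ, IsNF.var]
  | conj n G k hdisj _ ih => exact .conj n G _ hdisj fun i a ha => ih i a ha
  | max Y φ hfree hφ ih =>
    by_cases h : Y = X
    · simpa [Frm.subst, h] using IsNF.max Y φ hfree hφ
    · simp only [Frm.subst, if_neg h]
      exact .max Y _ (by simp [fv_subst hχc, hfree, h]) ih

theorem IsNF.conj_inv {n : ℕ} {f : Fin n → Frm Act} (h : IsNF (.conj n f)) :
    ∃ (G : Fin n → Set Act) (k : Fin n → Act → Frm Act),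
      f = (fun i => .box (G i) (k i)) ∧
      (∀ i j, i ≠ j → ∀ a ∈ G i, a ∉ G j) ∧ (∀ i, ∀ a ∈ G i, IsNF (k i a)) := by
  cases h with
  | conj n G k hdisj hk => exact ⟨G, k, rfl, hdisj, hk⟩

theorem IsNF.conj_box_inv {n : ℕ} {G : Fin n → Set Act} {k : Fin n → Act → Frm Act}
    (h : IsNF (.conj n fun j => .box (G j) (k j))) :
    (∀ i j, i ≠ j → ∀ a ∈ G i, a ∉ G j) ∧ (∀ i, ∀ a ∈ G i, IsNF (k i a)) := by
  obtain ⟨G', k', hf, hdisj, hk⟩ := h.conj_inv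
  have hG : G = G' := funext fun i => (box.inj (congrFun hf i)).1
  have hk' : k = k' := funext fun i => (box.inj (congrFun hf i)).2
  subst hG hk'
  exact ⟨hdisj, hk⟩

def ClosedNF (φ : Frm Act) : Prop := φ.Closed ∧ φ.IsNF

theorem closedNF_tt : ClosedNF (.tt : Frm Act) := ⟨rfl, .tt⟩

theorem ClosedNF.subst_max {X : ℕ} {b : Frm Act} (h : ClosedNF (.max X b)) :
    ClosedNF (subst b X (.max X b)) := by
  obtain ⟨hc, hn⟩ := h
  cases hn with
  | max _ _ hfree hb => exact ⟨hc.subst_max, IsNF.subst hc (.max X b hfree hb) hb X⟩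

theorem ClosedNF.of_conj {n : ℕ} {G : Fin n → Set Act} {k : Fin n → Act → Frm Act}
    (h : ClosedNF (.conj n fun j => .box (G j) (k j))) {i : Fin n} {a : Act} (ha : a ∈ G i) :
    ClosedNF (k i a) := by
  refine ⟨?_, h.2.conj_box_inv.2 i a ha⟩
  have := h.1
  simp only [Closed, fv, Set.iUnion_eq_empty] at this
  exact this i a ha

inductive UnfStep : Frm Act → Frm Act → Prop
  | mk (X : ℕ) (b : Frm Act) : UnfStep (.max X b) (subst b X (.max X b))

abbrev Unf : Frm Act → Frm Act → Prop := Relation.ReflTransGen UnfStep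

theorem UnfStep.right_unique : Relator.RightUnique (UnfStep (Act := Act)) := by
  rintro _ _ _ ⟨⟩ ⟨⟩; rfl

theorem UnfStep.closedNF {ψ χ : Frm Act} (h : UnfStep ψ χ) (hψ : ClosedNF ψ) :
    ClosedNF χ := by
  cases h; exact hψ.subst_max

theorem UnfStep.ne_ff {ψ χ : Frm Act} (h : UnfStep ψ χ) (hψ : IsNF ψ) : χ ≠ .ff := by
  cases h with
  | mk X b =>
    cases hψ with
    | max _ _ hfree _ =>
      rw [Ne, subst_eq_ff_iff (by simp)]
      rintro rfl
      simp [fv] at hfree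

theorem Unf.closedNF {ψ χ : Frm Act} (h : Unf ψ χ) (hψ : ClosedNF ψ) : ClosedNF χ := by
  induction h with
  | refl => exact hψ
  | tail _ hstep ih => exact hstep.closedNF ih

theorem Unf.ne_ff {ψ χ : Frm Act} (h : Unf ψ χ) (hψ : ClosedNF ψ) (hff : ψ ≠ .ff) :
    χ ≠ .ff := by
  rcases Relation.ReflTransGen.cases_tail h with rfl | ⟨_, hb, hstep⟩
  · exact hff
  · exact hstep.ne_ff (Unf.closedNF hb hψ).2

theorem Unf.of_terminal {x y z : Frm Act} (hxy : Unf x y) (hxz : Unf x z)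
    (hz : ∀ w, ¬ UnfStep z w) : Unf y z := by
  rcases hxy.total_of_right_unique UnfStep.right_unique hxz with h | h
  · exact h
  · rcases Relation.ReflTransGen.cases_head h with rfl | ⟨w, hzw, _⟩
    · exact .refl
    · exact absurd hzw (hz w)

theorem not_unfStep_conj {n : ℕ} {f : Fin n → Frm Act} {χ : Frm Act} :
    ¬ UnfStep (.conj n f) χ := nofun

end Frm

open Enf.Frm Function

section Semantics

variable (L : LTS Act)

theorem sem_mono_of_fv (φ : Frm Act) {ρ ρ' : ℕ → Set L.S}
    (h : ∀ X ∈ fv φ, ρ X ⊆ ρ' X) : sem L φ ρ ⊆ sem L φ ρ' := by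
  induction φ generalizing ρ ρ' with
  | tt | ff => exact le_rfl
  | var X => exact h X rfl
  | conj n f ih =>
    exact Set.iInter_mono fun i => ih i fun X hX => h X (Set.mem_iUnion_of_mem i hX)
  | box G k ih =>
    intro p hp a ha q hw
    exact ih a (fun X hX => h X (Set.mem_biUnion ha hX)) (hp a ha q hw)
  | max X φ ih =>
    refine Set.sUnion_subset_sUnion fun S hS => hS.trans (ih fun Y hY => ?_)
    rcases eq_or_ne Y X with rfl | hne
    · simp
    · simpa [hne] using h Y ⟨hY, hne⟩

theorem sem_monotone (φ : Frm Act) : Monotone (sem L φ) :=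
  fun _ _ h => sem_mono_of_fv L φ fun X _ => h X

theorem sem_congr (φ : Frm Act) {ρ ρ' : ℕ → Set L.S} (h : ∀ X ∈ fv φ, ρ X = ρ' X) :
    sem L φ ρ = sem L φ ρ' :=
  (sem_mono_of_fv L φ fun X hX => (h X hX).le).antisymm
    (sem_mono_of_fv L φ fun X hX => (h X hX).ge)

theorem sem_of_closed {φ : Frm Act} (hφ : φ.Closed) (ρ ρ' : ℕ → Set L.S) :
    sem L φ ρ = sem L φ ρ' :=
  sem_congr L φ fun X hX => (hφ.notMem_fv X hX).elim

def semBody (X : ℕ) (φ : Frm Act) (ρ : ℕ → Set L.S) : Set L.S →o Set L.S :=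
  ⟨fun S => sem L φ (update ρ X S), fun _ _ h => sem_monotone L φ (update_mono h)⟩

theorem sem_max (X : ℕ) (φ : Frm Act) (ρ : ℕ → Set L.S) :
    sem L (.max X φ) ρ = (semBody L X φ ρ).gfp := rfl

theorem sem_subst {χ : Frm Act} (hχ : χ.Closed) (φ : Frm Act) (X : ℕ) (ρ : ℕ → Set L.S) :
    sem L (subst φ X χ) ρ = sem L φ (update ρ X (sem L χ ρ)) := by
  induction φ generalizing ρ with
  | tt | ff => rfl
  | var Y => rcases eq_or_ne Y X with rfl | hne <;> simp [subst, sem, *]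
  | conj n f ih => exact Set.iInter_congr fun i => ih i ρ
  | box G k ih => simp only [subst, sem, ih]
  | max Y φ ih =>
    rcases eq_or_ne Y X with rfl | hne
    · simp only [subst]
      exact sem_congr L _ fun Z hZ => (update_of_ne hZ.2 _ _).symm
    · simp only [subst, if_neg hne, sem_max, semBody, ih, sem_of_closed L hχ _ ρ,
        update_comm hne]

theorem Sem_subst_max {X : ℕ} {b : Frm Act} (h : Closed (.max X b)) :
    Sem L (.max X b) = Sem L (subst b X (.max X b)) := by
  rw [Sem, Sem, sem_subst L h]
  exact (OrderHom.map_gfp (semBody L X b _)).symm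

theorem Frm.Unf.Sem_eq {ψ χ : Frm Act} (h : Unf ψ χ) (hψ : ClosedNF ψ) :
    Sem L ψ = Sem L χ := by
  induction h with
  | refl => rfl
  | tail hU hstep ih =>
    cases hstep
    exact ih.trans (Sem_subst_max L (Unf.closedNF hU hψ).1)

end Semantics

section TauClosure

def TauClosed (L : LTS Act) (T : Set L.S) : Prop :=
  ∀ p p', p ∈ T → L.Tr p none p' → p' ∈ T

variable {L : LTS Act}

theorem TauClosed.mem_of_tauStar {T : Set L.S} (hT : TauClosed L T) {p p' : L.S}
    (h : TauStar L p p') (hp : p ∈ T) : p' ∈ T := by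
  induction h with
  | refl => exact hp
  | tail _ hs ih => exact hT _ _ ih hs

theorem tauClosed_sem (φ : Frm Act) {ρ : ℕ → Set L.S} (hρ : ∀ X, TauClosed L (ρ X)) :
    TauClosed L (sem L φ ρ) := by
  induction φ generalizing ρ with
  | tt => intro _ _ _ _; trivial
  | ff => intro _ _ hp; exact hp.elim
  | var X => exact hρ X
  | conj n f ih =>
    exact fun p p' hp hs => Set.mem_iInter.2 fun i => ih i hρ p p' (Set.mem_iInter.1 hp i) hs
  | box G k ih =>
    rintro p p' hp hs a ha q ⟨p₁, p₂, h₁, hstep, h₂⟩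
    exact hp a ha q ⟨p₁, p₂, .head hs h₁, hstep, h₂⟩
  | max X φ ih =>
    intro p p' hp hs
    let F := semBody L X φ ρ
    let T : Set L.S := {q' | ∃ q ∈ F.gfp, TauStar L q q'}
    have hT : TauClosed L T := fun _ _ ⟨q, hq, h⟩ hs => ⟨q, hq, h.tail hs⟩
    have hFT : TauClosed L (F T) := ih fun Y => by
      rcases eq_or_ne Y X with rfl | hne
      · simpa using hT
      · simpa [hne] using hρ Y
    have hpost : T ≤ F T := by
      rintro q' ⟨q, hq, h⟩
      have hgfp : F.gfp ≤ T := fun r hr => ⟨r, hr, .refl⟩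
      exact hFT.mem_of_tauStar h (F.mono hgfp (F.map_gfp.symm ▸ hq))
    exact F.le_gfp hpost ⟨p, hp, .single hs⟩

theorem tauClosed_Sem (φ : Frm Act) : TauClosed L (Sem L φ) :=
  tauClosed_sem φ fun _ _ _ hp => hp.elim

end TauClosure

namespace Frm

/-- The continuations `k a` of a box at actions `a ∉ G` are junk: the semantics ignores them,
but `subst` rewrites them. In a clean formula they are all `tt`, so a closed clean formula is
fixed by `subst`, which is what lets substitutions compose (`subst_cleanSubst`). -/
def IsClean : Frm Act → Prop
  | .tt => True
  | .ff => True
  | .var _ => True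
  | .conj _ f => ∀ i, IsClean (f i)
  | .box G k => ∀ a, (a ∈ G → IsClean (k a)) ∧ (a ∉ G → k a = .tt)
  | .max _ b => IsClean b

noncomputable def cleanSubst : Frm Act → (ℕ → Frm Act) → Frm Act
  | .tt, _ => .tt
  | .ff, _ => .ff
  | .var Y, σ => σ Y
  | .conj n f, σ => .conj n fun i => cleanSubst (f i) σ
  | .box G k, σ => .box G fun a => if a ∈ G then cleanSubst (k a) σ else .tt
  | .max Y b, σ => .max Y (cleanSubst b (update σ Y (.var Y)))

noncomputable def clean (φ : Frm Act) : Frm Act := cleanSubst φ .var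

theorem isClean_cleanSubst (φ : Frm Act) {σ : ℕ → Frm Act}
    (h : ∀ Y ∈ fv φ, IsClean (σ Y)) : IsClean (cleanSubst φ σ) := by
  induction φ generalizing σ with
  | tt | ff => trivial
  | var Y => exact h Y rfl
  | conj n f ih => exact fun i => ih i fun Y hY => h Y (Set.mem_iUnion_of_mem i hY)
  | box G k ih =>
    intro a
    by_cases ha : a ∈ G
    · simpa [cleanSubst, ha] using ih a fun Y hY => h Y (Set.mem_biUnion ha hY)
    · simp [ha]
  | max X b ih =>
    refine ih fun Y hY => ?_
    rcases eq_or_ne Y X with rfl | hne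
    · simp [IsClean]
    · simpa [hne] using h Y ⟨hY, hne⟩

theorem fv_cleanSubst_subset (φ : Frm Act) (σ : ℕ → Frm Act) :
    fv (cleanSubst φ σ) ⊆ ⋃ Y ∈ fv φ, fv (σ Y) := by
  induction φ generalizing σ with
  | tt | ff => simp [cleanSubst, fv]
  | var Y => simp [cleanSubst, fv]
  | conj n f ih =>
    simp only [cleanSubst, fv, Set.iUnion_subset_iff]
    intro i Z hZ
    obtain ⟨Y, hY, hZ⟩ := Set.mem_iUnion₂.1 (ih i σ hZ)
    exact Set.mem_biUnion (Set.mem_iUnion_of_mem i hY) hZ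
  | box G k ih =>
    simp only [cleanSubst, fv, Set.iUnion_subset_iff]
    intro a ha Z hZ
    rw [if_pos ha] at hZ
    obtain ⟨Y, hY, hZ⟩ := Set.mem_iUnion₂.1 (ih a σ hZ)
    exact Set.mem_biUnion (Set.mem_biUnion ha hY) hZ
  | max X b ih =>
    rintro Z ⟨hZ, hZX⟩
    obtain ⟨Y, hY, hZ⟩ := Set.mem_iUnion₂.1 (ih _ hZ)
    rcases eq_or_ne Y X with rfl | hne
    · exact (hZX (by simpa [fv] using hZ)).elim
    · rw [update_of_ne hne] at hZ
      exact Set.mem_biUnion ⟨hY, hne⟩ hZ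

theorem closed_cleanSubst (φ : Frm Act) {σ : ℕ → Frm Act}
    (hσ : ∀ Y ∈ fv φ, (σ Y).Closed) :
    (cleanSubst φ σ).Closed :=
  Set.subset_empty_iff.1 <| (fv_cleanSubst_subset φ σ).trans <|
    Set.iUnion₂_subset fun Y hY => (hσ Y hY).subset

theorem IsClean.subst_eq_self {ψ : Frm Act} (hψ : IsClean ψ) {X : ℕ} (hX : X ∉ fv ψ)
    (χ : Frm Act) : subst ψ X χ = ψ := by
  induction ψ with
  | tt | ff => rfl
  | var Y => exact if_neg fun (h : Y = X) => hX (h ▸ rfl)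
  | conj n f ih =>
    simp only [fv, Set.mem_iUnion, not_exists] at hX
    simp only [subst, conj.injEq, heq_eq_eq, true_and]
    exact funext fun i => ih i (hψ i) (hX i)
  | box G k ih =>
    simp only [fv, Set.mem_iUnion, not_exists] at hX
    simp only [subst, box.injEq, true_and]
    funext a
    by_cases ha : a ∈ G
    · exact ih a ((hψ a).1 ha) (hX a ha)
    · rw [(hψ a).2 ha]; rfl
  | max Y b ih =>
    rcases eq_or_ne Y X with rfl | hne
    · simp [subst]
    · simp only [subst, if_neg hne, max.injEq, true_and]
      exact ih hψ fun hb => hX ⟨hb, hne.symm⟩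

theorem subst_cleanSubst (φ : Frm Act) (σ : ℕ → Frm Act) (X : ℕ) (χ : Frm Act)
    (h : ∀ Y ∈ fv φ, Y ≠ X → subst (σ Y) X χ = σ Y) :
    subst (cleanSubst φ (update σ X (.var X))) X χ = cleanSubst φ (update σ X χ) := by
  induction φ generalizing σ with
  | tt | ff => rfl
  | var Y =>
    rcases eq_or_ne Y X with rfl | hne
    · simp [cleanSubst, subst]
    · simpa [cleanSubst, hne] using h Y rfl hne
  | conj n f ih =>
    simp only [cleanSubst, subst, conj.injEq, heq_eq_eq, true_and]
    exact funext fun i => ih i σ fun Y hY => h Y (Set.mem_iUnion_of_mem i hY)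
  | box G k ih =>
    simp only [cleanSubst, subst, box.injEq, true_and]
    funext a
    by_cases ha : a ∈ G
    · simpa [ha] using ih a σ fun Y hY => h Y (Set.mem_biUnion ha hY)
    · simp [ha, subst]
  | max Z b ih =>
    rcases eq_or_ne Z X with rfl | hne
    · simp [cleanSubst, subst]
    · simp only [cleanSubst, subst, if_neg hne, max.injEq, true_and]
      rw [update_comm hne.symm, update_comm hne.symm]
      refine ih _ fun Y hY hYX => ?_
      rcases eq_or_ne Y Z with rfl | hYZ
      · simp [subst, hne]
      · simpa [hYZ] using h Y ⟨hY, hYZ⟩ hYX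

@[simp] theorem clean_var (Y : ℕ) : clean (.var Y : Frm Act) = .var Y := rfl

@[simp] theorem clean_conj {n : ℕ} (f : Fin n → Frm Act) :
    clean (.conj n f) = .conj n fun i => clean (f i) := rfl

@[simp] theorem clean_box (G : Set Act) (k : Act → Frm Act) :
    clean (.box G k) = .box G fun a => if a ∈ G then clean (k a) else .tt := rfl

@[simp] theorem clean_max (X : ℕ) (b : Frm Act) : clean (.max X b) = .max X (clean b) := by
  simp [clean, cleanSubst]

theorem clean_subst (φ : Frm Act) (X : ℕ) (χ : Frm Act) :
    clean (subst φ X χ) = subst (clean φ) X (clean χ) := by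
  induction φ with
  | tt | ff => rfl
  | var Y => rcases eq_or_ne Y X with rfl | hne <;> simp [subst, *]
  | conj n f ih => simp [subst, ih]
  | box G k ih =>
    simp only [subst, clean_box, box.injEq, true_and]
    funext a
    split_ifs <;> simp [ih, subst]
  | max Y b ih => rcases eq_or_ne Y X with rfl | hne <;> simp [subst, *]

end Frm

section SatisfactionRelations

variable {L : LTS Act} {R : L.S → Frm Act → Prop}

theorem IsSatRel.map_clean (hR : IsSatRel L R) :
    IsSatRel L fun p φ => ∃ ψ, R p ψ ∧ Frm.clean ψ = φ := by
  obtain ⟨hff, hconj, hbox, hmax⟩ := hR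
  refine ⟨?_, ?_, ?_, ?_⟩
  · rintro p ⟨ψ, hψ, hc⟩
    cases ψ <;> cases hc
    exact hff p hψ
  · rintro p n f ⟨ψ, hψ, hc⟩ i
    cases ψ <;> cases hc
    exact ⟨_, hconj p _ _ hψ i, rfl⟩
  · rintro p G k ⟨ψ, hψ, hc⟩ a ha q hw
    cases ψ <;> cases hc
    exact ⟨_, hbox p _ _ hψ a ha q hw, (if_pos ha).symm⟩
  · rintro p X d ⟨ψ, hψ, hc⟩
    cases ψ with
    | max Y b =>
      obtain ⟨rfl, rfl⟩ := max.inj ((clean_max Y b).symm.trans hc)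
      exact ⟨_, hmax p _ _ hψ, by rw [clean_subst, clean_max]⟩
    | _ => cases hc

theorem IsSatRel.mem_sem_cleanSubst (hR : IsSatRel L R) (φ : Frm Act) {σ : ℕ → Frm Act}
    (hσ : ∀ Y ∈ fv φ, (σ Y).Closed ∧ (σ Y).IsClean) {p : L.S}
    (hp : R p (cleanSubst φ σ)) :
    p ∈ sem L φ fun Y => {q | R q (σ Y)} := by
  obtain ⟨hff, hconj, hbox, hmax⟩ := hR
  induction φ generalizing σ p with
  | tt => trivial
  | ff => exact hff p hp
  | var Y => exact hp
  | conj n f ih =>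
    exact Set.mem_iInter.2 fun i =>
      ih i (fun Y hY => hσ Y (Set.mem_iUnion_of_mem i hY)) (hconj p n _ hp i)
  | box G k ih =>
    intro a ha q hw
    have hq := hbox p _ _ hp a ha q hw
    rw [if_pos ha] at hq
    exact ih a (fun Y hY => hσ Y (Set.mem_biUnion ha hY)) hq
  | max X b ih =>
    set M : Frm Act := cleanSubst (.max X b) σ
    have hMc : M.Closed := closed_cleanSubst _ fun Y hY => (hσ Y hY).1
    have hMclean : M.IsClean := isClean_cleanSubst _ fun Y hY => (hσ Y hY).2
    have hσM : ∀ Y ∈ fv b, (update σ X M Y).Closed ∧ (update σ X M Y).IsClean := by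
      intro Y hY
      rcases eq_or_ne Y X with rfl | hne
      · simpa using ⟨hMc, hMclean⟩
      · simpa [hne] using hσ Y ⟨hY, hne⟩
    have henv : (fun Y => {q | R q (update σ X M Y)}) = update (fun Y => {q | R q (σ Y)}) X
        {q | R q M} := by
      funext Y
      rcases eq_or_ne Y X with rfl | hne <;> simp [*]
    -- `{q | R q M}` is a post-fixpoint: unfolding `M` is `cleanSubst b` with `X ↦ M`.
    refine OrderHom.le_gfp (semBody L X b _) (a := {q | R q M}) (fun q hq => ?_) hp
    have hunf : R q (subst (cleanSubst b (update σ X (.var X))) X M) := hmax q X _ hq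
    rw [subst_cleanSubst b σ X M fun Y hY hne =>
      (hσ Y ⟨hY, hne⟩).2.subst_eq_self ((hσ Y ⟨hY, hne⟩).1.notMem_fv X) M] at hunf
    have := ih hσM hunf
    rwa [henv] at this

theorem mem_Sem_of_satCo {φ : Frm Act} (hφ : φ.Closed) {p : L.S} (h : SatCo L p φ) :
    p ∈ Sem L φ := by
  obtain ⟨R, hR, hp⟩ := h
  have := hR.map_clean.mem_sem_cleanSubst φ (σ := .var)
    (fun Y hY => (hφ.notMem_fv Y hY).elim) ⟨φ, hp, rfl⟩
  rwa [Sem, sem_of_closed L hφ _ _]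

end SatisfactionRelations

section Synthesis

variable {l : Option Act × Option Act} {e' : Trn Act}

theorem tstep_id_iff : TStep .id l e' ↔ ∃ a, l = (some a, some a) ∧ e' = .id := by
  constructor
  · rintro ⟨⟩; exact ⟨_, rfl, rfl⟩
  · rintro ⟨a, rfl, rfl⟩; exact .id a

theorem tstep_prf_iff {G : Set (Option Act)} {out : Option Act → Option Act}
    {k : Option Act → Trn Act} {γ μ : Option Act} :
    TStep (.prf G out k) (γ, μ) e' ↔ γ ∈ G ∧ μ = out γ ∧ e' = k γ := by
  constructor
  · intro h; cases h with | prf h => exact ⟨h, rfl, rfl⟩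
  · rintro ⟨h, rfl, rfl⟩; exact .prf h

theorem tstep_sel_iff {n : ℕ} {f : Fin n → Trn Act} :
    TStep (.sel n f) l e' ↔ ∃ i, TStep (f i) l e' := by
  constructor
  · intro h; cases h with | sel i h => exact ⟨i, h⟩
  · rintro ⟨i, h⟩; exact .sel i h

theorem tstep_fix_iff {x : ℕ} {e : Trn Act} :
    TStep (.fix x e) l e' ↔ TStep (e.tsubst x (.fix x e)) l e' := by
  constructor
  · intro h; cases h with | fix h => exact h
  · exact .fix

theorem tsubst_synth_zero (s : Trn Act) {ψ : Frm Act} (hψ : ψ.IsNF) :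
    (synth ψ).tsubst 0 s = synth ψ := by
  induction hψ with
  | tt | ff => rfl
  | var X => simp [synth, Trn.tsubst]
  | conj => simp [synth, Trn.tsubst]
  | max X b _ _ ih => simp [synth, Trn.tsubst, ih]

theorem tsubst_synth_succ {χ : Frm Act} (hχ : χ ≠ .ff) (φ : Frm Act) (X : ℕ) :
    (synth φ).tsubst (X + 1) (synth χ) = synth (subst φ X χ) := by
  induction φ with
  | tt | ff => rfl
  | var Y => rcases eq_or_ne Y X with rfl | hne <;> simp [synth, subst, Trn.tsubst, *]
  | conj n f ih => simp [synth, subst, Trn.tsubst, ih]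
  | box G k ih =>
    simp only [synth, subst, Trn.tsubst, subst_eq_ff_iff hχ, Trn.prf.injEq, true_and]
    funext γ
    rcases γ with _ | a
    · rfl
    · by_cases hk : k a = .ff <;> simp [hk, Trn.tsubst, ih]
  | max Y b ih => rcases eq_or_ne Y X with rfl | hne <;> simp [synth, subst, Trn.tsubst, *]

theorem Frm.UnfStep.tstep_synth_iff {ψ χ : Frm Act} (h : UnfStep ψ χ) :
    TStep (synth ψ) l e' ↔ TStep (synth χ) l e' := by
  cases h with
  | mk X b => rw [synth, tstep_fix_iff, ← synth, tsubst_synth_succ (by simp)]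

theorem Frm.Unf.tstep_synth_iff {ψ χ : Frm Act} (h : Unf ψ χ) :
    TStep (synth ψ) l e' ↔ TStep (synth χ) l e' := by
  induction h with
  | refl => rfl
  | tail _ hstep ih => exact ih.trans hstep.tstep_synth_iff

theorem exists_terminal_unf_of_tstep_synth {ψ : Frm Act} (h : TStep (synth ψ) l e') :
    ∃ χ, Unf ψ χ ∧ (∀ w, ¬ UnfStep χ w) ∧ TStep (synth χ) l e' := by
  -- Normal forms need not be guarded (`max X. X` is one), so we induct on the derivation.
  generalize he : synth ψ = e at h
  induction h generalizing ψ
  case fix hstep ih =>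
    cases ψ with
    | max X b =>
      obtain ⟨rfl, rfl⟩ := Trn.fix.inj he
      obtain ⟨χ, hU, hterm, hχ⟩ := ih (tsubst_synth_succ (χ := .max X b) (by simp) b X).symm
      exact ⟨χ, .head (.mk X b) hU, hterm, hχ⟩
    | _ => exact ⟨_, .refl, nofun, he ▸ .fix hstep⟩
  all_goals
    refine ⟨ψ, .refl, ?_, ?_⟩
    · rintro _ ⟨⟩
      contradiction
    · rw [he]
      constructor <;> assumption

theorem Frm.ClosedNF.synth_eq_id_or_conj {χ : Frm Act} (hχ : ClosedNF χ)
    (hterm : ∀ w, ¬ UnfStep χ w) :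
    synth χ = .id ∨ ∃ (n : ℕ) (G : Fin n → Set Act) (k : Fin n → Act → Frm Act),
      χ = .conj n (fun j => .box (G j) (k j)) ∧ ∀ i, ∀ a ∈ G i, IsNF (k i a) := by
  obtain ⟨hc, hn⟩ := hχ
  cases hn with
  | tt | ff => exact .inl rfl
  | var X => exact absurd rfl (hc.notMem_fv X)
  | conj n G k _ hk => exact .inr ⟨n, G, k, rfl, hk⟩
  | max X b => exact absurd (.mk X b) (hterm _)

theorem tstep_tsubst_synth_box {G : Set Act} {k : Act → Frm Act} {s : Trn Act}
    {γ μ : Option Act} :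
    TStep ((synth (.box G k)).tsubst 0 s) (γ, μ) e' ↔
      ∃ a ∈ G, γ = some a ∧
        (k a = .ff ∧ μ = none ∧ e' = s ∨
          k a ≠ .ff ∧ μ = some a ∧ e' = (synth (k a)).tsubst 0 s) := by
  rw [synth, Trn.tsubst, tstep_prf_iff]
  constructor
  · rintro ⟨⟨a, ha, rfl⟩, rfl, rfl⟩
    by_cases hk : k a = .ff <;> simp [hk, ha, Trn.tsubst]
  · rintro ⟨a, ha, rfl, ⟨hk, rfl, rfl⟩ | ⟨hk, rfl, rfl⟩⟩ <;> simp [hk, ha, Trn.tsubst]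

theorem tstep_synth_conj_iff {n : ℕ} {G : Fin n → Set Act} {k : Fin n → Act → Frm Act}
    (hk : ∀ i, ∀ a ∈ G i, IsNF (k i a)) {γ μ : Option Act} :
    TStep (synth (.conj n fun j => .box (G j) (k j))) (γ, μ) e' ↔
      ∃ i, ∃ a ∈ G i, γ = some a ∧
        (k i a = .ff ∧ μ = none ∧ e' = synth (.conj n fun j => .box (G j) (k j)) ∨
          k i a ≠ .ff ∧ μ = some a ∧ e' = synth (k i a)) := by
  rw [synth, tstep_fix_iff, Trn.tsubst, tstep_sel_iff]
  refine exists_congr fun i => ?_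
  rw [tstep_tsubst_synth_box]
  refine exists_congr fun a => and_congr_right fun ha => ?_
  rw [tsubst_synth_zero _ (hk i a ha)]

theorem exists_tstep_synth_conj {n : ℕ} {G : Fin n → Set Act} {k : Fin n → Act → Frm Act}
    (hk : ∀ i, ∀ a ∈ G i, IsNF (k i a)) {i : Fin n} {a : Act} (ha : a ∈ G i) :
    ∃ μ e', TStep (synth (.conj n fun j => .box (G j) (k j))) (some a, μ) e' := by
  by_cases hka : k i a = .ff
  · exact ⟨_, _, (tstep_synth_conj_iff hk).2 ⟨i, a, ha, rfl, .inl ⟨hka, rfl, rfl⟩⟩⟩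
  · exact ⟨_, _, (tstep_synth_conj_iff hk).2 ⟨i, a, ha, rfl, .inr ⟨hka, rfl, rfl⟩⟩⟩

end Synthesis

section Instrumentation

variable {L : LTS Act} {γ μ : Option Act} {e' : Trn Act}

theorem not_tstep_synth_insert {ψ : Frm Act} (hψ : ClosedNF ψ) :
    ¬ TStep (synth ψ) (none, μ) e' := by
  intro h
  obtain ⟨χ, hU, hterm, hχ⟩ := exists_terminal_unf_of_tstep_synth h
  rcases (hU.closedNF hψ).synth_eq_id_or_conj hterm with hid | ⟨n, G, k, rfl, hk⟩
  · obtain ⟨a, ha, -⟩ := tstep_id_iff.1 (hid ▸ hχ)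
    cases ha
  · obtain ⟨i, a, -, ha, -⟩ := (tstep_synth_conj_iff hk).1 hχ
    cases ha

theorem exists_unf_of_tstep_synth_silent {ψ : Frm Act} (hψ : ClosedNF ψ)
    (h : TStep (synth ψ) (γ, none) e') : ∃ χ, Unf ψ χ ∧ e' = synth χ := by
  obtain ⟨χ, hU, hterm, hχ⟩ := exists_terminal_unf_of_tstep_synth h
  rcases (hU.closedNF hψ).synth_eq_id_or_conj hterm with hid | ⟨n, G, k, rfl, hk⟩
  · obtain ⟨a, ha, -⟩ := tstep_id_iff.1 (hid ▸ hχ)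
    cases ha
  · obtain ⟨i, a, -, -, ⟨-, -, rfl⟩ | ⟨-, h, -⟩⟩ := (tstep_synth_conj_iff hk).1 hχ
    · exact ⟨_, hU, rfl⟩
    · cases h

theorem exists_unf_of_tauStar_synth {ψ : Frm Act} (hψ : ClosedNF ψ) {q : L.S}
    {s' : Trn Act × L.S} (h : TauStar (instLTS L) (synth ψ, q) s') :
    ∃ χ q', Unf ψ χ ∧ s' = (synth χ, q') := by
  induction h with
  | refl => exact ⟨ψ, q, .refl, rfl⟩
  | tail _ hstep ih =>
    obtain ⟨χ, q₁, hU, rfl⟩ := ih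
    cases hstep with
    | trn _ hT =>
      obtain ⟨χ', hU', rfl⟩ := exists_unf_of_tstep_synth_silent (hU.closedNF hψ) hT
      exact ⟨χ', _, hU.trans hU', rfl⟩
    | asy _ => exact ⟨χ, _, hU, rfl⟩
    | ins hT => exact (not_tstep_synth_insert (hU.closedNF hψ) hT).elim

theorem tstep_synth_of_mem_Sem {ψ : Frm Act} (hψ : ClosedNF ψ) {q q' : L.S} {a : Act}
    (hq : q ∈ Sem L ψ) (htr : L.Tr q (some a) q') (h : TStep (synth ψ) (some a, μ) e') :
    μ = some a ∧ ∃ χ, ClosedNF χ ∧ e' = synth χ ∧ q' ∈ Sem L χ := by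
  obtain ⟨χ, hU, hterm, hχ⟩ := exists_terminal_unf_of_tstep_synth h
  have hχnf := hU.closedNF hψ
  rcases hχnf.synth_eq_id_or_conj hterm with hid | ⟨n, G, k, rfl, hk⟩
  · obtain ⟨b, hb, rfl⟩ := tstep_id_iff.1 (hid ▸ hχ)
    simp only [Prod.mk.injEq, Option.some.injEq] at hb
    obtain ⟨rfl, rfl⟩ := hb
    exact ⟨rfl, .tt, closedNF_tt, rfl, trivial⟩
  · obtain ⟨i, b, hb, hab, hcase⟩ := (tstep_synth_conj_iff hk).1 hχ
    obtain rfl := Option.some.inj hab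
    have hq' : q' ∈ Sem L (k i a) := by
      rw [hU.Sem_eq L hψ] at hq
      exact Set.mem_iInter.1 hq i a hb q' ⟨q, q', .refl, htr, .refl⟩
    rcases hcase with ⟨hff, -, -⟩ | ⟨-, rfl, rfl⟩
    · rw [hff] at hq'
      exact hq'.elim
    · exact ⟨rfl, k i a, hχnf.of_conj hb, rfl, hq'⟩

end Instrumentation

section Enforcement

variable (L : LTS Act)

def soundnessRel (s : Trn Act × L.S) (φ : Frm Act) : Prop :=
  ∃ ψ₀ ψ, ClosedNF ψ₀ ∧ ψ₀ ≠ .ff ∧ Unf ψ₀ ψ ∧ s.1 = synth ψ ∧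
    (Unf ψ₀ φ ∨ ∃ (n : ℕ) (G : Fin n → Set Act) (k : Fin n → Act → Frm Act),
      Unf ψ₀ (.conj n fun j => .box (G j) (k j)) ∧ ∃ i, φ = .box (G i) (k i))

variable {L}

theorem soundnessRel_box {s s' : Trn Act × L.S} {G : Set Act} {k : Act → Frm Act}
    (hs : soundnessRel L s (.box G k)) {a : Act} (ha : a ∈ G) (hw : WStep (instLTS L) s a s') :
    soundnessRel L s' (k a) := by
  obtain ⟨ψ₀, ψ, hψ₀, -, hU, hs, hU' | ⟨n, G, k, hC, i, hGk⟩⟩ := hs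
  · exact absurd (hU'.closedNF hψ₀).2 nofun
  obtain ⟨rfl, rfl⟩ := box.inj hGk
  have hCnf := hC.closedNF hψ₀
  obtain ⟨hdisj, hk⟩ := hCnf.2.conj_box_inv
  obtain ⟨s₁, s₂, hτ₁, hstep, hτ₂⟩ := hw
  obtain ⟨e, q⟩ := s
  obtain rfl : e = synth ψ := hs
  obtain ⟨ψ₁, q₁, hU₁, rfl⟩ := exists_unf_of_tauStar_synth (hU.closedNF hψ₀) hτ₁
  have hU₀₁ : Unf ψ₀ ψ₁ := hU.trans hU₁
  have hUC := hU₀₁.of_terminal hC fun _ => not_unfStep_conj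
  cases hstep with
  | trn _ hT =>
    obtain ⟨i', b, hb, hab, ⟨-, h, -⟩ | ⟨hne, hba, rfl⟩⟩ :=
      (tstep_synth_conj_iff hk).1 (hUC.tstep_synth_iff.1 hT)
    · cases h
    obtain rfl := Option.some.inj hba
    obtain rfl : i = i' := by_contra fun h => hdisj i' i (Ne.symm h) a hb ha
    obtain ⟨ψ₂, q₂, hU₂, rfl⟩ := exists_unf_of_tauStar_synth (hCnf.of_conj ha) hτ₂
    exact ⟨k i a, ψ₂, hCnf.of_conj ha, hne, hU₂, rfl, .inl .refl⟩
  | ins hT => exact (not_tstep_synth_insert (hU₀₁.closedNF hψ₀) hT).elim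
  | ter _ hno =>
    obtain ⟨μ, e', hT⟩ := exists_tstep_synth_conj hk ha
    exact (hno μ e' (hUC.tstep_synth_iff.2 hT)).elim

theorem isSatRel_soundnessRel : IsSatRel (instLTS L) (soundnessRel L) := by
  refine ⟨?_, ?_, fun s G k hs a ha s' hw => soundnessRel_box hs ha hw, ?_⟩
  · rintro s ⟨ψ₀, ψ, hψ₀, hff, -, -, hU | ⟨_, _, _, -, _, h⟩⟩
    · exact hU.ne_ff hψ₀ hff rfl
    · cases h
  · rintro s n f ⟨ψ₀, ψ, hψ₀, hff, hU, hs, hU' | ⟨_, _, _, -, _, h⟩⟩ i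
    · obtain ⟨G, k, rfl, -, -⟩ := (hU'.closedNF hψ₀).2.conj_inv
      exact ⟨ψ₀, ψ, hψ₀, hff, hU, hs, .inr ⟨n, G, k, hU', i, rfl⟩⟩
    · cases h
  · rintro s X φ ⟨ψ₀, ψ, hψ₀, hff, hU, hs, hU' | ⟨_, _, _, -, _, h⟩⟩
    · exact ⟨ψ₀, ψ, hψ₀, hff, hU, hs, .inl (hU'.tail (.mk X φ))⟩
    · cases h

variable (L) in
def transparencyRel (s : Trn Act × L.S) (p : L.S) : Prop :=
  s.2 = p ∧ ∃ ψ, ClosedNF ψ ∧ s.1 = synth ψ ∧ p ∈ Sem L ψ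

theorem isBisim_transparencyRel : IsBisim (instLTS L) L (transparencyRel L) := by
  rintro ⟨e, q⟩ p ⟨rfl, ψ, hψ, rfl, hq⟩
  constructor
  · rintro μ ⟨e', q'⟩ hstep
    cases hstep with
    | trn htr hT =>
      obtain ⟨rfl, χ, hχ, rfl, hq'⟩ := tstep_synth_of_mem_Sem hψ hq htr hT
      exact ⟨q', htr, rfl, χ, hχ, rfl, hq'⟩
    | asy htr => exact ⟨q', htr, rfl, ψ, hψ, rfl, tauClosed_Sem ψ _ _ hq htr⟩
    | ins hT => exact (not_tstep_synth_insert hψ hT).elim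
    | ter htr => exact ⟨q', htr, rfl, .tt, closedNF_tt, rfl, trivial⟩
  · rintro (_ | a) q' htr
    · exact ⟨(synth ψ, q'), .asy htr, rfl, ψ, hψ, rfl, tauClosed_Sem ψ _ _ hq htr⟩
    by_cases hex : ∃ μ e', TStep (synth ψ) (some a, μ) e'
    · obtain ⟨μ, e', hT⟩ := hex
      obtain ⟨rfl, χ, hχ, rfl, hq'⟩ := tstep_synth_of_mem_Sem hψ hq htr hT
      exact ⟨(synth χ, q'), .trn htr hT, rfl, χ, hχ, rfl, hq'⟩
    · exact ⟨(.id, q'), .ter htr (fun μ e' h => hex ⟨μ, e', h⟩)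
        (fun _ _ => not_tstep_synth_insert hψ), rfl, .tt, closedNF_tt, rfl, trivial⟩

end Enforcement

/-- For every closed SHMLnf formula φ, the synthesised transducer
⟦φ⟧e enforces φ (hence SHMLnf is enforceable): (i) soundness — for every system
p, if φ is satisfiable then ⟦φ⟧e[p] ∈ ⟦φ⟧; and (ii) transparency — for every
system p, if p ∈ ⟦φ⟧ then ⟦φ⟧e[p] ∼ p. -/
theorem shmlnf_enforceable (Act : Type) (L : LTS Act) (φ : Frm Act)
    (hclosed : φ.Closed) (hnf : φ.IsNF) :
    (∀ p : L.S, SatIn L φ → (synth φ, p) ∈ Sem (instLTS L) φ) ∧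
    (∀ p : L.S, p ∈ Sem L φ → Bisim (instLTS L) L (synth φ, p) p) := by
  refine ⟨fun p hsat => ?_, fun p hp => ?_⟩
  · have hff : φ ≠ .ff := by
      rintro rfl
      exact hsat.ne_empty rfl
    have hseed : soundnessRel L (synth φ, p) φ :=
      ⟨φ, φ, ⟨hclosed, hnf⟩, hff, .refl, rfl, .inl .refl⟩
    exact mem_Sem_of_satCo hclosed ⟨soundnessRel L, isSatRel_soundnessRel, hseed⟩
  · exact ⟨transparencyRel L, isBisim_transparencyRel, rfl, φ, ⟨hclosed, hnf⟩, rfl, hp⟩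

end Enf
end

section
/- Second violating-trace-semantics condition for SHML: for every closed formula φ ∈ SHML and every system p, if p does not satisfy φ (p ∉ ⟦φ⟧) then there exists a trace t ∈ Act* such that p ⊨v^t φ, i.e., every violating system exhibits a violating trace. -/
set_option autoImplicit false

namespace Enf

open scoped Classical

variable {Act : Type}

/-! Contrapositively, a state without violating trace satisfies `φ`. This is proved for open
formulas: if each variable `Y` is interpreted by a set containing the non-violating states of
a closed formula `σ Y`, then the non-violating states of `φσ` lie in `⟦φ⟧ρ`, by induction on
`φ`. For `max X.ψ` the non-violating states of `(max X.ψ)σ` form a post-fixpoint of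
`S ↦ ⟦ψ⟧ρ[X ↦ S]`: the unfolding of `(max X.ψ)σ` is `ψ(σ[X ↦ (max X.ψ)σ])`, and a violation
of the unfolding is a violation of the fixpoint. -/

namespace Frm

/-- Equality of formulas up to the continuations of modalities outside their guards, which
neither the semantics nor the violation relation inspects. -/
inductive Sim : Frm Act → Frm Act → Prop
  | tt : Sim .tt .tt
  | ff : Sim .ff .ff
  | var (X : ℕ) : Sim (.var X) (.var X)
  | conj {n : ℕ} {f f' : Fin n → Frm Act} (h : ∀ i, Sim (f i) (f' i)) :
      Sim (.conj n f) (.conj n f')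
  | box {G : Set Act} {k k' : Act → Frm Act} (h : ∀ a ∈ G, Sim (k a) (k' a)) :
      Sim (.box G k) (.box G k')
  | max {X : ℕ} {φ φ' : Frm Act} (h : Sim φ φ') : Sim (.max X φ) (.max X φ')

namespace Sim

theorem refl : ∀ φ : Frm Act, Sim φ φ
  | .tt => .tt
  | .ff => .ff
  | .var X => .var X
  | .conj _ f => .conj fun i => refl (f i)
  | .box _ k => .box fun a _ => refl (k a)
  | .max _ φ => .max (refl φ)

theorem symm {φ φ' : Frm Act} (h : Sim φ φ') : Sim φ' φ := by
  induction h with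
  | tt => exact .tt
  | ff => exact .ff
  | var X => exact .var X
  | conj _ ih => exact .conj ih
  | box _ ih => exact .box ih
  | max _ ih => exact .max ih

theorem subst {φ φ' ψ ψ' : Frm Act} (X : ℕ) (h : Sim φ φ') (hψ : Sim ψ ψ') :
    Sim (φ.subst X ψ) (φ'.subst X ψ') := by
  induction h with
  | tt => exact .tt
  | ff => exact .ff
  | var Y =>
    simp only [Frm.subst]
    split
    · exact hψ
    · exact .var Y
  | conj _ ih => exact .conj ih
  | box _ ih => exact .box ih
  | max h ih =>
    simp only [Frm.subst]
    split
    · exact .max h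
    · exact .max ih

theorem viol {L : LTS Act} {p : L.S} {t : List Act} {φ φ' : Frm Act} (hs : Sim φ φ')
    (hv : Viol L p t φ) : Viol L p t φ' := by
  induction hv generalizing φ' with
  | ff p => cases hs; exact .ff p
  | conj j _ ih =>
    cases hs with
    | conj h => exact .conj j (ih (h j))
  | box ha hw _ ih =>
    cases hs with
    | box h => exact .box ha hw (ih (h _ ha))
  | max _ ih =>
    cases hs with
    | max h => exact .max (ih (h.subst _ (.max h)))

end Sim

theorem subst_sim_self {X : ℕ} {χ : Frm Act} :
    ∀ {φ : Frm Act}, X ∉ φ.fv → Sim (φ.subst X χ) φ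
  | .tt, _ => .tt
  | .ff, _ => .ff
  | .var Y, h => by
    rw [fv, Set.mem_singleton_iff] at h
    rw [subst, if_neg (Ne.symm h)]
    exact .var Y
  | .conj _ f, h => .conj fun i => subst_sim_self fun hi => h (Set.mem_iUnion.2 ⟨i, hi⟩)
  | .box G k, h => .box fun a ha =>
      subst_sim_self fun hi => h (Set.mem_iUnion₂.2 ⟨a, ha, hi⟩)
  | .max Y ψ, h => by
    rw [subst]
    split_ifs with hYX
    · exact Sim.refl _
    · exact .max (subst_sim_self fun hX => h ⟨hX, Ne.symm hYX⟩)

/-- Simultaneous substitution `φσ`. -/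
def msubst : Frm Act → (ℕ → Frm Act) → Frm Act
  | .tt, _ => .tt
  | .ff, _ => .ff
  | .var X, σ => σ X
  | .conj n f, σ => .conj n fun i => msubst (f i) σ
  | .box G k, σ => .box G fun a => msubst (k a) σ
  | .max X φ, σ => .max X (msubst φ (Function.update σ X (.var X)))

theorem fv_msubst_subset (φ : Frm Act) (σ : ℕ → Frm Act) :
    (φ.msubst σ).fv ⊆ ⋃ Y, (σ Y).fv := by
  induction φ generalizing σ with
  | tt | ff => simp [msubst, fv]
  | var X => exact Set.subset_iUnion (fun Y => (σ Y).fv) X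
  | conj n f ih => exact Set.iUnion_subset fun i => ih i σ
  | box G k ih => exact Set.iUnion₂_subset fun a _ => ih a σ
  | max X ψ ih =>
    rintro x ⟨hx, hxX⟩
    obtain ⟨Y, hY⟩ := Set.mem_iUnion.1 (ih _ hx)
    rcases eq_or_ne Y X with rfl | hYX
    · simp only [Function.update_self, fv] at hY
      exact absurd hY hxX
    · rw [Function.update_of_ne hYX] at hY
      exact Set.mem_iUnion.2 ⟨Y, hY⟩

theorem msubst_sim_self (φ : Frm Act) {σ : ℕ → Frm Act} (hσ : ∀ Y ∈ φ.fv, σ Y = .var Y) :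
    Sim (φ.msubst σ) φ := by
  induction φ generalizing σ with
  | tt => exact .tt
  | ff => exact .ff
  | var X =>
    rw [msubst, hσ X rfl]
    exact .var X
  | conj n f ih => exact .conj fun i => ih i fun Y hY => hσ Y (Set.mem_iUnion.2 ⟨i, hY⟩)
  | box G k ih => exact .box fun a ha => ih a fun Y hY => hσ Y (Set.mem_iUnion₂.2 ⟨a, ha, hY⟩)
  | max X ψ ih =>
    refine .max (ih fun Y hY => ?_)
    rcases eq_or_ne Y X with rfl | hYX
    · exact Function.update_self ..
    · rw [Function.update_of_ne hYX]
      exact hσ Y ⟨hY, hYX⟩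

theorem msubst_update_sim (φ : Frm Act) {σ : ℕ → Frm Act} {X : ℕ} {χ : Frm Act}
    (hσ : ∀ Y ≠ X, X ∉ (σ Y).fv) :
    Sim (φ.msubst (Function.update σ X χ))
      ((φ.msubst (Function.update σ X (.var X))).subst X χ) := by
  induction φ generalizing σ with
  | tt => exact .tt
  | ff => exact .ff
  | var Y =>
    rcases eq_or_ne Y X with rfl | hYX
    · simp only [msubst, Function.update_self, subst]
      exact Sim.refl _
    · simp only [msubst, Function.update_of_ne hYX]
      exact (subst_sim_self (hσ Y hYX)).symm
  | conj n f ih => exact .conj fun i => ih i hσ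
  | box G k ih => exact .box fun a _ => ih a hσ
  | max Y ψ ih =>
    rcases eq_or_ne Y X with rfl | hYX
    · simp only [msubst, Function.update_idem, subst]
      exact Sim.refl _
    · simp only [msubst, subst, if_neg hYX, Function.update_comm hYX.symm]
      refine .max (ih fun Z hZX => ?_)
      rcases eq_or_ne Z Y with rfl | hZY
      · simpa [fv] using hYX.symm
      · rw [Function.update_of_ne hZY]
        exact hσ Z hZX

end Frm

def nonViolating (L : LTS Act) (φ : Frm Act) : Set L.S := {p | ∀ t, ¬ Viol L p t φ}

theorem nonViolating_msubst_subset_sem (L : LTS Act) (φ : Frm Act) {σ : ℕ → Frm Act}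
    {ρ : ℕ → Set L.S} (hσ : ∀ Y, (σ Y).Closed) (hρ : ∀ Y, nonViolating L (σ Y) ⊆ ρ Y) :
    nonViolating L (φ.msubst σ) ⊆ sem L φ ρ := by
  induction φ generalizing σ ρ with
  | tt => exact Set.subset_univ _
  | ff => exact fun p hp => hp [] (.ff p)
  | var X => exact hρ X
  | conj n f ih =>
    exact fun p hp => Set.mem_iInter.2 fun i =>
      ih i hσ hρ fun t hv => hp t (.conj i hv)
  | box G k ih =>
    exact fun p hp a ha q hq => ih a hσ hρ fun t hv => hp (a :: t) (.box ha hq hv)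
  | max X ψ ih =>
    set χ : Frm Act := (Frm.max X ψ).msubst σ
    have hσX : ∀ Y, X ∉ (σ Y).fv := fun Y => (hσ Y).symm ▸ Set.notMem_empty X
    have hχ : χ.Closed := by
      refine Set.sdiff_eq_empty.2 fun x hx => ?_
      obtain ⟨Y, hY⟩ := Set.mem_iUnion.1 (Frm.fv_msubst_subset _ _ hx)
      rcases eq_or_ne Y X with rfl | hYX
      · simpa [Frm.fv] using hY
      · rw [Function.update_of_ne hYX, hσ Y] at hY
        exact absurd hY (Set.notMem_empty x)
    have hunfold : nonViolating L χ ⊆ nonViolating L (ψ.msubst (Function.update σ X χ)) :=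
      fun q hq t hv => hq t <| .max <|
        (ψ.msubst_update_sim fun Y _ => hσX Y).viol hv
    refine fun p hp => Set.mem_sUnion.2 ⟨_, fun q hq => ?_, hp⟩
    refine ih (σ := Function.update σ X χ) (fun Y => ?_) (fun Y => ?_) (hunfold hq)
    · rcases eq_or_ne Y X with rfl | hYX
      · simpa using hχ
      · simpa [Function.update_of_ne hYX] using hσ Y
    · rcases eq_or_ne Y X with rfl | hYX
      · simp
      · simpa [Function.update_of_ne hYX] using hρ Y

/-- second violating-trace-semantics condition: if p ∉ ⟦φ⟧ then
there is a trace t with p ⊨v^t φ. -/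
theorem violating_trace_cond2 (Act : Type) (L : LTS Act) (φ : Frm Act)
    (hclosed : φ.Closed) (p : L.S) (hnsat : p ∉ Sem L φ) :
    ∃ t : List Act, Viol L p t φ := by
  by_contra! hno
  have hsim : Frm.Sim (φ.msubst fun _ => .ff) φ :=
    φ.msubst_sim_self fun Y hY => absurd hY (hclosed ▸ Set.notMem_empty Y)
  refine hnsat <| nonViolating_msubst_subset_sem L φ (σ := fun _ => .ff) (fun _ => rfl)
    (fun _ q hq => hq [] (.ff q)) fun t hv => hno t (hsim.viol hv)

end Enf
end
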